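/- Let D be a probability distribution supported on [−1/4, 1/4], let δ_1,…,δ_B be i.i.d. with law D, and let μ₂ = E_{δ∼D}[δ²]. Then the expected KL budget satisfies 2·B·μ₂ ≤ E[ K(δ_{1:B}) ] ≤ (9/4)·B·μ₂, where the expectation is over the random draw δ_{1:B} ∼ D^B. -/
import Mathlib

set_option maxHeartbeats 1000000

open Real MeasureTheory

/-- Probability mass of a Bernoulli(p) outcome. -/
def bernPMF (p : ℝ) : Bool → ℝ := fun b => if b then p else 1 - p

/-- Probability mass function of the product measure `P_δ` on `{0,1}^B` whose `t`-th
coordinate is `Bernoulli(1/2 + δ t)`. -/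
noncomputable def prodPMF (B : ℕ) (δ : Fin B → ℝ) (y : Fin B → Bool) : ℝ :=
  ∏ t, bernPMF (1/2 + δ t) (y t)

/-- KL budget `K(δ) = KL(P_δ ‖ P_0)` where `P_0` is the uniform measure on `{0,1}^B`. -/
noncomputable def klProd (B : ℕ) (δ : Fin B → ℝ) : ℝ :=
  ∑ y : Fin B → Bool,
    prodPMF B δ y * Real.log (prodPMF B δ y / prodPMF B (fun _ => 0) y)

lemma log_taylor_bound (u : ℝ) (hu : |u| ≤ 1/2) :
    |Real.log (1 - u) + (u + u^2/2 + u^3/3 + u^4/4 + u^5/5 + u^6/6 + u^7/7 + u^8/8 + u^9/9)|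
      ≤ 2 * u^10 := by
  have h1 : |u| < 1 := lt_of_le_of_lt hu (by norm_num)
  have A := Real.abs_log_sub_add_sum_range_le h1 9
  simp only [Finset.sum_range_succ, Finset.sum_range_zero] at A
  have h2 : |u| ^ 10 / (1 - |u|) ≤ 2 * u ^ 10 := by
    have hpow : |u| ^ 10 = u ^ 10 := by
      rw [← abs_pow, abs_of_nonneg (by positivity)]
    have h3 : (1:ℝ)/2 ≤ 1 - |u| := by linarith
    rw [div_le_iff₀ (by linarith [abs_nonneg u])]
    nlinarith [pow_nonneg (abs_nonneg u) 10, abs_nonneg u, hpow]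
  calc _ ≤ |u| ^ 10 / (1 - |u|) := by
        convert A using 2; push_cast; ring
    _ ≤ 2 * u ^ 10 := h2

lemma g_bounds (u : ℝ) (hu : |u| ≤ 1/2) :
    u^2 ≤ (1+u) * Real.log (1+u) + (1-u) * Real.log (1-u) ∧
      (1+u) * Real.log (1+u) + (1-u) * Real.log (1-u) ≤ 9/8 * u^2 := by
  obtain ⟨hl, hr⟩ := abs_le.mp hu
  have h1 := abs_le.mp (log_taylor_bound u hu)
  have h2 := abs_le.mp (log_taylor_bound (-u) (by rwa [abs_neg]))
  rw [show 1 - -u = 1 + u by ring] at h2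
  set a := Real.log (1 + u) with ha
  set b := Real.log (1 - u) with hb
  have hP1 : -(2*u^10) - (u + u^2/2 + u^3/3 + u^4/4 + u^5/5 + u^6/6 + u^7/7 + u^8/8 + u^9/9) ≤ b := by
    nlinarith [h1.2, sq_nonneg (u^5)]
  have hP2 : b ≤ 2*u^10 - (u + u^2/2 + u^3/3 + u^4/4 + u^5/5 + u^6/6 + u^7/7 + u^8/8 + u^9/9) := by
    nlinarith [h1.1, sq_nonneg (u^5)]
  have hQ1 : -(2*u^10) + (u - u^2/2 + u^3/3 - u^4/4 + u^5/5 - u^6/6 + u^7/7 - u^8/8 + u^9/9) ≤ a := by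
    nlinarith [h2.2, sq_nonneg (u^5)]
  have hQ2 : a ≤ 2*u^10 + (u - u^2/2 + u^3/3 - u^4/4 + u^5/5 - u^6/6 + u^7/7 - u^8/8 + u^9/9) := by
    nlinarith [h2.1, sq_nonneg (u^5)]
  have h1u : (0:ℝ) ≤ 1 + u := by linarith
  have h1u' : (0:ℝ) ≤ 1 - u := by linarith
  have s2 : (0:ℝ) ≤ u^2 := sq_nonneg u
  have hu2 : u^2 ≤ 1/4 := by
    calc u^2 = |u|^2 := (sq_abs u).symm
      _ ≤ (1/2:ℝ)^2 := pow_le_pow_left₀ (abs_nonneg u) hu 2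
      _ = 1/4 := by norm_num
  have e4 : u^4 ≤ u^2/4 := by
    calc u^4 = u^2*u^2 := by ring
      _ ≤ (u^2/4)*1 := by nlinarith [mul_le_mul_of_nonneg_right hu2 s2]
      _ = u^2/4 := by ring
  have e6 : u^6 ≤ u^2/16 := by
    calc u^6 = u^4*u^2 := by ring
      _ ≤ (u^2/4)*(1/4) := mul_le_mul e4 hu2 s2 (by linarith)
      _ = u^2/16 := by ring
  have e8 : u^8 ≤ u^2/64 := by
    calc u^8 = u^6*u^2 := by ring
      _ ≤ (u^2/16)*(1/4) := mul_le_mul e6 hu2 s2 (by linarith)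
      _ = u^2/64 := by ring
  have e10 : u^10 ≤ u^2/256 := by
    calc u^10 = u^8*u^2 := by ring
      _ ≤ (u^2/64)*(1/4) := mul_le_mul e8 hu2 s2 (by linarith)
      _ = u^2/256 := by ring
  have hu6c : u^6 ≤ 1/64 := by
    calc u^6 = (u^2)^3 := by ring
      _ ≤ (1/4:ℝ)^3 := pow_le_pow_left₀ s2 hu2 3
      _ = 1/64 := by norm_num
  have n4 : (0:ℝ) ≤ u^4 := by positivity
  have e104 : u^10 ≤ u^4/64 := by
    calc u^10 = u^4*u^6 := by ring
      _ ≤ u^4*(1/64) := mul_le_mul_of_nonneg_left hu6c n4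
      _ = u^4/64 := by ring
  have n6 : (0:ℝ) ≤ u^6 := by positivity
  have n8 : (0:ℝ) ≤ u^8 := by positivity
  have n10 : (0:ℝ) ≤ u^10 := by positivity
  constructor
  · have la := mul_le_mul_of_nonneg_left hQ1 h1u
    have lb := mul_le_mul_of_nonneg_left hP1 h1u'
    have key : u^2 ≤ (1+u)*(-(2*u^10) + (u - u^2/2 + u^3/3 - u^4/4 + u^5/5 - u^6/6 + u^7/7 - u^8/8 + u^9/9))
        + (1-u)*(-(2*u^10) - (u + u^2/2 + u^3/3 + u^4/4 + u^5/5 + u^6/6 + u^7/7 + u^8/8 + u^9/9)) := by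
      nlinarith [e104, n4, n6, n8]
    linarith [la, lb, key]
  · have la := mul_le_mul_of_nonneg_left hQ2 h1u
    have lb := mul_le_mul_of_nonneg_left hP2 h1u'
    have key : (1+u)*(2*u^10 + (u - u^2/2 + u^3/3 - u^4/4 + u^5/5 - u^6/6 + u^7/7 - u^8/8 + u^9/9))
        + (1-u)*(2*u^10 - (u + u^2/2 + u^3/3 + u^4/4 + u^5/5 + u^6/6 + u^7/7 + u^8/8 + u^9/9)) ≤ 9/8 * u^2 := by
      nlinarith [e4, e6, e8, e10, n10]
    linarith [la, lb, key]

/-- Per-coordinate KL contribution. -/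
noncomputable def phi (x : ℝ) : ℝ :=
  bernPMF (1/2+x) true * Real.log (bernPMF (1/2+x) true / bernPMF (1/2) true)
    + bernPMF (1/2+x) false * Real.log (bernPMF (1/2+x) false / bernPMF (1/2) false)

lemma phi_eq (x : ℝ) : phi x
    = (1/2+x) * Real.log ((1/2+x) / (1/2)) + (1-(1/2+x)) * Real.log ((1-(1/2+x)) / (1/2)) := by
  simp [phi, bernPMF]
  left
  congr 1
  field_simp
  ring

lemma phi_measurable : Measurable phi := by
  have : phi = fun x => (1/2+x) * Real.log ((1/2+x) / (1/2))
      + (1-(1/2+x)) * Real.log ((1-(1/2+x)) / (1/2)) := funext phi_eq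
  rw [this]
  exact ((measurable_const.add measurable_id).mul
      (((measurable_const.add measurable_id).div_const _).log)).add
    ((measurable_const.sub (measurable_const.add measurable_id)).mul
      (((measurable_const.sub (measurable_const.add measurable_id)).div_const _).log))

lemma phi_bounds (x : ℝ) (hx : |x| ≤ 1/4) : 2*x^2 ≤ phi x ∧ phi x ≤ 9/4*x^2 := by
  rw [phi_eq]
  have hu : |2*x| ≤ 1/2 := by
    rw [abs_mul, abs_two]; linarith [abs_le.mp hx |>.1, abs_le.mp hx |>.2, abs_nonneg x,
      (abs_le.mp hx).2]
  obtain ⟨g1, g2⟩ := g_bounds (2*x) hu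
  have a1 : (1/2+x)/(1/2) = 1+2*x := by ring
  have a2 : (1-(1/2+x))/(1/2) = 1-2*x := by ring
  rw [a1, a2]
  constructor <;> nlinarith [g1, g2]

lemma marg {B : ℕ} (p : Fin B → Bool → ℝ) (hp : ∀ t, p t true + p t false = 1)
    (s : Fin B) (g : Bool → ℝ) :
    ∑ y : Fin B → Bool, (∏ t, p t (y t)) * g (y s)
      = p s true * g true + p s false * g false := by
  have step : ∀ y : Fin B → Bool, (∏ t, p t (y t)) * g (y s)
      = ∏ t, (p t (y t) * (if t = s then g (y t) else 1)) := by
    intro y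
    rw [Finset.prod_mul_distrib, Finset.prod_ite_eq' Finset.univ s (fun t => g (y t))]
    simp
  simp_rw [step]
  have huniv : (Finset.univ : Finset (Fin B → Bool))
      = Fintype.piFinset (fun _ : Fin B => (Finset.univ : Finset Bool)) :=
    Fintype.piFinset_univ.symm
  rw [huniv,
    ← Finset.prod_univ_sum (fun _ : Fin B => (Finset.univ : Finset Bool))
      (fun t b => p t b * if t = s then g b else 1)]
  have factor : ∀ t : Fin B, (∑ b : Bool, p t b * (if t = s then g b else 1))
      = if t = s then (p s true * g true + p s false * g false) else 1 := by
    intro t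
    by_cases h : t = s
    · subst h; simp [Fintype.sum_bool]
    · simp [h, Fintype.sum_bool, hp t]
  rw [Finset.prod_congr rfl (fun t _ => factor t), Finset.prod_ite_eq' Finset.univ s]
  simp

lemma klProd_eq {B : ℕ} (δ : Fin B → ℝ) (h : ∀ t, |δ t| ≤ 1/4) :
    klProd B δ = ∑ s, phi (δ s) := by
  have hpos : ∀ t b, 0 < bernPMF (1/2 + δ t) b := by
    intro t b
    have := abs_le.mp (h t)
    cases b <;> simp [bernPMF] <;> linarith [this.1, this.2]
  have hhalf : ∀ b, bernPMF (1/2 + 0) b = (1/2 : ℝ) := by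
    intro b; cases b <;> simp [bernPMF] <;> norm_num
  have hlog : ∀ y : Fin B → Bool,
      Real.log (prodPMF B δ y / prodPMF B (fun _ => 0) y)
        = ∑ t, Real.log (bernPMF (1/2 + δ t) (y t) / bernPMF (1/2) (y t)) := by
    intro y
    unfold prodPMF
    rw [← Finset.prod_div_distrib, Real.log_prod]
    · refine Finset.sum_congr rfl fun t _ => ?_
      rw [hhalf (y t)]
      cases y t <;> norm_num [bernPMF]
    · intro t _
      exact div_ne_zero (hpos t _).ne' (by rw [hhalf]; norm_num)
  unfold klProd
  simp_rw [hlog, Finset.mul_sum]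
  rw [Finset.sum_comm]
  refine Finset.sum_congr rfl fun s _ => ?_
  have := marg (fun t => bernPMF (1/2 + δ t))
    (fun t => by norm_num [bernPMF]) s
    (fun b => Real.log (bernPMF (1/2 + δ s) b / bernPMF (1/2) b))
  unfold prodPMF phi
  exact this

/-- **Expected KL budget under stochastic heterogeneity.** If `δ_1, …, δ_B` are i.i.d. with
law `D` supported on `[−1/4, 1/4]` and `μ₂ = E_{δ∼D}[δ²]`, then
`2·B·μ₂ ≤ E[K(δ_{1:B})] ≤ (9/4)·B·μ₂`, the expectation being over `δ_{1:B} ∼ D^B`. -/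
theorem expected_kl_budget (B : ℕ) (hB : 1 ≤ B) (D : Measure ℝ) [IsProbabilityMeasure D]
    (hsupp : ∀ᵐ x ∂D, |x| ≤ 1/4) :
    2 * B * (∫ x, x ^ 2 ∂D) ≤
        (∫ δ, klProd B δ ∂(Measure.pi fun _ : Fin B => D)) ∧
      (∫ δ, klProd B δ ∂(Measure.pi fun _ : Fin B => D)) ≤
        9/4 * B * (∫ x, x ^ 2 ∂D) := by
  have hae : ∀ᵐ δ ∂(Measure.pi fun _ : Fin B => D), ∀ t, |δ t| ≤ 1/4 := by
    rw [ae_all_iff]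
    intro t
    exact (Measure.tendsto_eval_ae_ae (μ := fun _ : Fin B => D) (i := t)).eventually hsupp
  have hmap : ∀ t : Fin B, (Measure.pi fun _ : Fin B => D).map (Function.eval t) = D := by
    intro t
    refine Measure.ext fun s hs => ?_
    rw [Measure.map_apply (measurable_pi_apply t) hs, Set.eval_preimage, Measure.pi_pi]
    rw [Fintype.prod_eq_single t]
    · simp
    · intro j hj
      simp [Function.update_apply, hj]
  -- integrability of phi along each coordinate
  have hbound : ∀ x : ℝ, |x| ≤ 1/4 → ‖phi x‖ ≤ 9/64 := by
    intro x hx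
    obtain ⟨l, u⟩ := phi_bounds x hx
    have hx2 : x^2 ≤ 1/16 := by
      obtain ⟨h1, h2⟩ := abs_le.mp hx; nlinarith
    rw [Real.norm_eq_abs, abs_of_nonneg (by nlinarith [sq_nonneg x])]
    nlinarith
  have hint : ∀ t : Fin B,
      Integrable (fun δ : Fin B → ℝ => phi (δ t)) (Measure.pi fun _ : Fin B => D) := by
    intro t
    refine Integrable.mono' (integrable_const (9/64 : ℝ))
      ((phi_measurable.comp (measurable_pi_apply t)).aestronglyMeasurable) ?_
    exact hae.mono fun δ hδ => hbound (δ t) (hδ t)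
  have hcong : (∫ δ, klProd B δ ∂(Measure.pi fun _ : Fin B => D))
      = (B : ℝ) * ∫ x, phi x ∂D := by
    rw [integral_congr_ae (hae.mono fun δ hδ => klProd_eq δ hδ),
      integral_finset_sum _ (fun t _ => hint t)]
    have : ∀ t : Fin B, (∫ δ : Fin B → ℝ, phi (δ t) ∂(Measure.pi fun _ : Fin B => D))
        = ∫ x, phi x ∂D := by
      intro t
      have h := integral_map (μ := Measure.pi fun _ : Fin B => D) (φ := Function.eval t)
        (measurable_pi_apply t).aemeasurable phi_measurable.aestronglyMeasurable
      rw [hmap t] at h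
      exact h.symm
    simp_rw [this]
    rw [Finset.sum_const, Finset.card_univ, Fintype.card_fin, nsmul_eq_mul]
  have hx2int : Integrable (fun x => x^2) D := by
    refine Integrable.mono' (integrable_const (1/16 : ℝ))
      ((measurable_id.pow_const 2).aestronglyMeasurable) ?_
    exact hsupp.mono fun x hx => by
      obtain ⟨h1, h2⟩ := abs_le.mp hx
      rw [Real.norm_eq_abs, abs_of_nonneg (sq_nonneg x)]
      nlinarith
  have hphiint : Integrable phi D := by
    refine Integrable.mono' (integrable_const (9/64 : ℝ))
      phi_measurable.aestronglyMeasurable ?_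
    exact hsupp.mono fun x hx => hbound x hx
  have h1 : 2 * ∫ x, x^2 ∂D ≤ ∫ x, phi x ∂D := by
    have := integral_mono_ae (hx2int.const_mul 2) hphiint
      (hsupp.mono fun x hx => (phi_bounds x hx).1)
    rwa [integral_const_mul] at this
  have h2 : (∫ x, phi x ∂D) ≤ 9/4 * ∫ x, x^2 ∂D := by
    have := integral_mono_ae hphiint (hx2int.const_mul (9/4))
      (hsupp.mono fun x hx => (phi_bounds x hx).2)
    rwa [integral_const_mul] at this
  have hBpos : (0:ℝ) ≤ (B : ℝ) := Nat.cast_nonneg B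
  constructor
  · rw [hcong]
    calc 2 * (B:ℝ) * (∫ x, x ^ 2 ∂D) = (B:ℝ) * (2 * ∫ x, x^2 ∂D) := by ring
      _ ≤ (B:ℝ) * ∫ x, phi x ∂D := mul_le_mul_of_nonneg_left h1 hBpos
  · rw [hcong]
    calc (B:ℝ) * ∫ x, phi x ∂D ≤ (B:ℝ) * (9/4 * ∫ x, x^2 ∂D) :=
        mul_le_mul_of_nonneg_left h2 hBpos
      _ = 9/4 * (B:ℝ) * (∫ x, x ^ 2 ∂D) := by ring
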